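/- (Effective mean ergodic bound, discrete time.) Let Ψ : X → ℝ be measurable with Ψ ∈ L²(m), and suppose there are constants C ≥ 0 and η > 0 such that |∫_X Ψ(T^j x) Ψ(x) dm(x) − m(Ψ)²| ≤ C e^{−ηj} for all integers j ≥ 1. Then for all integers N ≥ 1 and M with 1 ≤ M ≤ N, ‖λ_N Ψ − m(Ψ)‖² ≤ ((2M+1)‖Ψ‖² + 2C e^{−ηM}/(1 − e^{−η})) / N. -/

import Mathlib

open MeasureTheory Filter Set

private lemma aux_integrable_mul {X : Type*} [MeasurableSpace X] {m : Measure X} {f g : X → ℝ}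
    (hf : MemLp f 2 m) (hg : MemLp g 2 m) :
    Integrable (fun x => f x * g x) m := by
  have h2 : Integrable (fun x => (f x ^ 2 + g x ^ 2) / 2) m :=
    (hf.integrable_sq.add hg.integrable_sq).div_const 2
  refine h2.mono' (hf.aestronglyMeasurable.mul hg.aestronglyMeasurable) ?_
  filter_upwards with x
  rw [Real.norm_eq_abs, abs_mul]
  nlinarith [sq_nonneg (|f x| - |g x|), sq_abs (f x), sq_abs (g x),
    abs_nonneg (f x), abs_nonneg (g x)]

private lemma aux_abs_integral_mul_le {X : Type*} [MeasurableSpace X] {m : Measure X} {f g : X → ℝ}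
    (hf : MemLp f 2 m) (hg : MemLp g 2 m) :
    |∫ x, f x * g x ∂m| ≤ ((∫ x, f x ^ 2 ∂m) + ∫ x, g x ^ 2 ∂m) / 2 := by
  have h1 : |∫ x, f x * g x ∂m| ≤ ∫ x, |f x| * |g x| ∂m := by
    simpa [Real.norm_eq_abs, abs_mul] using norm_integral_le_integral_norm (fun x => f x * g x) (μ := m)
  refine h1.trans ?_
  have h2 : Integrable (fun x => (f x ^ 2 + g x ^ 2) / 2) m :=
    (hf.integrable_sq.add hg.integrable_sq).div_const 2
  have h3 : ∫ x, |f x| * |g x| ∂m ≤ ∫ x, (f x ^ 2 + g x ^ 2) / 2 ∂m := by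
    refine integral_mono ?_ h2 ?_
    · simpa [abs_mul] using (aux_integrable_mul hf hg).abs
    intro x
    simp only []
    nlinarith [sq_nonneg (|f x| - |g x|), sq_abs (f x), sq_abs (g x),
      abs_nonneg (f x), abs_nonneg (g x)]
  refine h3.trans_eq ?_
  rw [integral_div, integral_add hf.integrable_sq hg.integrable_sq]

/-- Effective mean ergodic bound (discrete time): if `Ψ ∈ L²(m)`
is real-valued and the correlations along a measure-preserving map `T` satisfy
`|∫ Ψ(T^j x) Ψ(x) dm − m(Ψ)²| ≤ C e^{−ηj}` for all integers `j ≥ 1`, then for all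
integers `N ≥ 1` and `1 ≤ M ≤ N`,
`‖λ_N Ψ − m(Ψ)‖² ≤ ((2M+1)‖Ψ‖² + 2C e^{−ηM}/(1 − e^{−η})) / N`,
where `λ_N Ψ(x) = (1/N) Σ_{k=1}^N Ψ(T^k x)`. -/
theorem effective_mean_ergodic_bound_discrete
    {X : Type*} [MeasurableSpace X] (m : Measure X) [IsProbabilityMeasure m]
    (T : X → X) (hT : MeasurePreserving T m m)
    (Ψ : X → ℝ) (hΨmeas : Measurable Ψ) (hΨ : MemLp Ψ 2 m)
    (C η : ℝ) (hC : 0 ≤ C) (hη : 0 < η)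
    (hdecay : ∀ j : ℕ, 1 ≤ j →
      |(∫ x, Ψ (T^[j] x) * Ψ x ∂m) - (∫ x, Ψ x ∂m) ^ 2| ≤ C * Real.exp (-η * j)) :
    ∀ N M : ℕ, 1 ≤ M → M ≤ N →
      ∫ x, ((1 / (N : ℝ)) * ∑ k ∈ Finset.Icc 1 N, Ψ (T^[k] x) - ∫ y, Ψ y ∂m) ^ 2 ∂m
        ≤ ((2 * (M : ℝ) + 1) * (∫ x, (Ψ x) ^ 2 ∂m)
            + 2 * C * Real.exp (-η * M) / (1 - Real.exp (-η))) / N := by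
  intro N M hM hMN
  set I : ℝ := ∫ y, Ψ y ∂m with hI
  set B : ℝ := ∫ x, (Ψ x) ^ 2 ∂m with hB
  set r : ℝ := Real.exp (-η) with hr
  have hr0 : 0 < r := Real.exp_pos _
  have hr1 : r < 1 := Real.exp_lt_one_iff.mpr (by linarith)
  have hrl : ∀ l : ℕ, Real.exp (-η * l) = r ^ l := by
    intro l; rw [mul_comm, Real.exp_nat_mul]
  set φ : X → ℝ := fun x => Ψ x - I with hφdef
  have hφmeas : Measurable φ := hΨmeas.sub measurable_const
  have hφ : MemLp φ 2 m := hΨ.sub (memLp_const I)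
  have hMP : ∀ j : ℕ, MeasurePreserving (T^[j]) m m := fun j => hT.iterate j
  have hφk : ∀ k : ℕ, MemLp (fun x => φ (T^[k] x)) 2 m :=
    fun k => hφ.comp_measurePreserving (hMP k)
  have hΨk : ∀ k : ℕ, MemLp (fun x => Ψ (T^[k] x)) 2 m :=
    fun k => hΨ.comp_measurePreserving (hMP k)
  have hIinv : ∀ (j : ℕ) (g : X → ℝ), AEStronglyMeasurable g m →
      ∫ x, g (T^[j] x) ∂m = ∫ y, g y ∂m := by
    intro j g hg
    have hmp := hMP j
    rw [← integral_map hmp.measurable.aemeasurable (by rwa [hmp.map_eq]), hmp.map_eq]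
  have hΨint : Integrable Ψ m := hΨ.integrable one_le_two
  have hN : 1 ≤ N := hM.trans hMN
  have hN0 : (0:ℝ) < (N:ℝ) := by exact_mod_cast hN
  -- the correlation function
  set c : ℕ → ℝ := fun l => ∫ x, φ (T^[l] x) * φ x ∂m with hc
  -- products are integrable
  have hint : ∀ j k : ℕ, Integrable (fun x => φ (T^[j] x) * φ (T^[k] x)) m :=
    fun j k => aux_integrable_mul (hφk j) (hφk k)
  -- ∫ φ² and its bound
  have hφsq : ∫ x, φ x ^ 2 ∂m = B - I ^ 2 := by
    have h1 : ∀ x, φ x ^ 2 = Ψ x ^ 2 - (2 * I * Ψ x - I ^ 2) := by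
      intro x; simp only [hφdef]; ring
    simp_rw [h1]
    have i1 : Integrable (fun x => 2 * I * Ψ x) m := hΨint.const_mul _
    have i2 : Integrable (fun x => 2 * I * Ψ x - I ^ 2) m := i1.sub (integrable_const _)
    rw [integral_sub hΨ.integrable_sq i2, integral_sub i1 (integrable_const _),
      integral_const_mul, integral_const]
    simp [← hI, ← hB]
    ring
  have hφsq_le : ∫ x, φ x ^ 2 ∂m ≤ B := by
    rw [hφsq]; nlinarith [sq_nonneg I]
  have hB0 : 0 ≤ B := integral_nonneg fun x => sq_nonneg _
  -- correlation identity
  have hcor : ∀ j k : ℕ, ∫ x, φ (T^[j] x) * φ (T^[k] x) ∂m = c (Nat.dist j k) := by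
    have key : ∀ j k : ℕ, j ≤ k →
        ∫ x, φ (T^[j] x) * φ (T^[k] x) ∂m = c (k - j) := by
      intro j k hjk
      have hg : ∀ x, φ (T^[k] x) = φ (T^[k - j] (T^[j] x)) := by
        intro x; rw [← Function.iterate_add_apply]; congr 2; omega
      calc ∫ x, φ (T^[j] x) * φ (T^[k] x) ∂m
          = ∫ x, (fun y => φ (T^[k - j] y) * φ y) (T^[j] x) ∂m := by
            refine integral_congr_ae (Filter.Eventually.of_forall fun x => ?_)
            simp only [hg x]; ring
        _ = ∫ y, φ (T^[k - j] y) * φ y ∂m :=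
            hIinv j (fun y => φ (T^[k - j] y) * φ y)
              (((hφmeas.comp (hMP (k-j)).measurable).mul hφmeas).aestronglyMeasurable)
        _ = c (k - j) := rfl
    intro j k
    rcases le_total j k with h | h
    · rw [key j k h, Nat.dist_eq_sub_of_le h]
    · have : (fun x => φ (T^[j] x) * φ (T^[k] x))
          = fun x => φ (T^[k] x) * φ (T^[j] x) := by funext x; ring
      rw [this, key k j h, Nat.dist_comm, Nat.dist_eq_sub_of_le h]
  -- uniform bound on |c|
  have hcB : ∀ l : ℕ, |c l| ≤ B := by
    intro l
    have h1 := aux_abs_integral_mul_le (hφk l) hφ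
    have h2 : ∫ x, (fun x => φ (T^[l] x)) x ^ 2 ∂m = ∫ x, φ x ^ 2 ∂m :=
      hIinv l (fun y => φ y ^ 2) ((hφmeas.pow_const 2).aestronglyMeasurable)
    rw [h2] at h1
    calc |c l| ≤ ((∫ x, φ x ^ 2 ∂m) + ∫ x, φ x ^ 2 ∂m) / 2 := h1
      _ = ∫ x, φ x ^ 2 ∂m := by ring
      _ ≤ B := hφsq_le
  -- decay bound on |c|
  have hcdecay : ∀ l : ℕ, 1 ≤ l → |c l| ≤ C * r ^ l := by
    intro l hl
    have hexp : ∀ x, φ (T^[l] x) * φ x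
        = Ψ (T^[l] x) * Ψ x - (I * Ψ (T^[l] x) + I * Ψ x - I ^ 2) := by
      intro x; simp only [hφdef]; ring
    have hΨlint : Integrable (fun x => Ψ (T^[l] x)) m := (hΨk l).integrable one_le_two
    have hcl : c l = (∫ x, Ψ (T^[l] x) * Ψ x ∂m) - I ^ 2 := by
      simp only [hc]
      simp_rw [hexp]
      have i1 : Integrable (fun x => I * Ψ (T^[l] x)) m := hΨlint.const_mul _
      have i2 : Integrable (fun x => I * Ψ x) m := hΨint.const_mul _
      have i3 : Integrable (fun x => I * Ψ (T^[l] x) + I * Ψ x) m := i1.add i2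
      have i4 : Integrable (fun x => I * Ψ (T^[l] x) + I * Ψ x - I ^ 2) m :=
        i3.sub (integrable_const _)
      rw [integral_sub (aux_integrable_mul (hΨk l) hΨ) i4,
        integral_sub i3 (integrable_const _), integral_add i1 i2,
        integral_const_mul, integral_const_mul, integral_const,
        hIinv l Ψ hΨ.aestronglyMeasurable]
      simp [← hI]
      ring
    rw [hcl, ← hrl l]
    exact hdecay l hl
  -- expand the square of the Birkhoff sum
  have hpt : ∀ x, ((1 / (N : ℝ)) * ∑ k ∈ Finset.Icc 1 N, Ψ (T^[k] x) - I) ^ 2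
      = ((N:ℝ)⁻¹) ^ 2 * ∑ j ∈ Finset.Icc 1 N, ∑ k ∈ Finset.Icc 1 N,
          φ (T^[j] x) * φ (T^[k] x) := by
    intro x
    have hsum : (1 / (N : ℝ)) * ∑ k ∈ Finset.Icc 1 N, Ψ (T^[k] x) - I
        = (N:ℝ)⁻¹ * ∑ k ∈ Finset.Icc 1 N, φ (T^[k] x) := by
      simp only [hφdef, Finset.sum_sub_distrib, Finset.sum_const, Nat.card_Icc,
        Nat.add_sub_cancel, nsmul_eq_mul, one_div]
      rw [mul_sub, inv_mul_cancel_left₀ (ne_of_gt hN0)]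
    rw [hsum, mul_pow]
    congr 1
    rw [sq, Finset.sum_mul_sum]
  have hInt2 : ∫ x, ((1 / (N : ℝ)) * ∑ k ∈ Finset.Icc 1 N, Ψ (T^[k] x) - I) ^ 2 ∂m
      = ((N:ℝ)⁻¹) ^ 2 * ∑ j ∈ Finset.Icc 1 N, ∑ k ∈ Finset.Icc 1 N, c (Nat.dist j k) := by
    simp_rw [hpt]
    rw [integral_const_mul,
      integral_finset_sum _ (fun j _ => integrable_finset_sum _ (fun k _ => hint j k))]
    congr 1
    refine Finset.sum_congr rfl fun j _ => ?_
    rw [integral_finset_sum _ (fun k _ => hint j k)]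
    exact Finset.sum_congr rfl fun k _ => hcor j k
  -- the geometric tail bound
  have hgeo : ∑ l ∈ Finset.Icc (M+1) N, C * r ^ l ≤ C * r ^ M * (1 - r)⁻¹ := by
    rw [← Finset.mul_sum]
    have h1 : ∑ l ∈ Finset.Icc (M+1) N, r ^ l
        = r ^ (M+1) * ∑ i ∈ Finset.range (N + 1 - (M+1)), r ^ i := by
      rw [← Finset.Ico_add_one_right_eq_Icc, Finset.sum_Ico_eq_sum_range, Finset.mul_sum]
      exact Finset.sum_congr rfl fun i _ => by rw [pow_add]
    have h2 : ∑ i ∈ Finset.range (N + 1 - (M+1)), r ^ i ≤ (1 - r)⁻¹ := by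
      rw [← tsum_geometric_of_lt_one hr0.le hr1]
      exact Summable.sum_le_tsum _ (fun i _ => by positivity)
        (summable_geometric_of_lt_one hr0.le hr1)
    calc C * ∑ l ∈ Finset.Icc (M+1) N, r ^ l
        = C * (r ^ (M+1) * ∑ i ∈ Finset.range (N + 1 - (M+1)), r ^ i) := by rw [h1]
      _ ≤ C * (r ^ (M+1) * (1 - r)⁻¹) := by
          refine mul_le_mul_of_nonneg_left ?_ hC
          refine mul_le_mul_of_nonneg_left h2 (by positivity)
      _ ≤ C * (r ^ M * (1 - r)⁻¹) := by
          refine mul_le_mul_of_nonneg_left ?_ hC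
          refine mul_le_mul_of_nonneg_right ?_ (inv_nonneg.mpr (by linarith))
          calc r ^ (M+1) = r ^ M * r := by rw [pow_succ]
            _ ≤ r ^ M * 1 := by
                refine mul_le_mul_of_nonneg_left hr1.le (by positivity)
            _ = r ^ M := mul_one _
      _ = C * r ^ M * (1 - r)⁻¹ := by ring
  -- inner sum bound
  have inner_bound : ∀ j ∈ Finset.Icc 1 N,
      ∑ k ∈ Finset.Icc 1 N, c (Nat.dist j k)
        ≤ (2 * (M:ℝ) + 1) * B + 2 * C * r ^ M / (1 - r) := by
    intro j hj
    obtain ⟨hj1, hjN⟩ := Finset.mem_Icc.mp hj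
    have step1 : ∑ k ∈ Finset.Icc 1 N, c (Nat.dist j k)
        ≤ ∑ k ∈ Finset.Icc 1 N, |c (Nat.dist j k)| :=
      Finset.sum_le_sum fun k _ => le_abs_self _
    refine step1.trans ?_
    rw [← Finset.sum_filter_add_sum_filter_not (Finset.Icc 1 N)
      (fun k => Nat.dist j k ≤ M)]
    have hnear : ∑ k ∈ (Finset.Icc 1 N).filter (fun k => Nat.dist j k ≤ M),
        |c (Nat.dist j k)| ≤ (2 * (M:ℝ) + 1) * B := by
      have hcard : ((Finset.Icc 1 N).filter (fun k => Nat.dist j k ≤ M)).card ≤ 2 * M + 1 := by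
        have hsub : (Finset.Icc 1 N).filter (fun k => Nat.dist j k ≤ M)
            ⊆ Finset.Icc (j - M) (j + M) := by
          intro k hk
          obtain ⟨hk1, hk2⟩ := Finset.mem_filter.mp hk
          simp only [Nat.dist] at hk2
          exact Finset.mem_Icc.mpr (by omega)
        calc ((Finset.Icc 1 N).filter (fun k => Nat.dist j k ≤ M)).card
            ≤ (Finset.Icc (j - M) (j + M)).card := Finset.card_le_card hsub
          _ = j + M + 1 - (j - M) := Nat.card_Icc _ _
          _ ≤ 2 * M + 1 := by omega
      calc ∑ k ∈ (Finset.Icc 1 N).filter (fun k => Nat.dist j k ≤ M), |c (Nat.dist j k)|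
          ≤ ∑ k ∈ (Finset.Icc 1 N).filter (fun k => Nat.dist j k ≤ M), B :=
            Finset.sum_le_sum fun k _ => hcB _
        _ = (((Finset.Icc 1 N).filter (fun k => Nat.dist j k ≤ M)).card : ℝ) * B := by
            rw [Finset.sum_const, nsmul_eq_mul]
        _ ≤ (2 * (M:ℝ) + 1) * B := by
            refine mul_le_mul_of_nonneg_right ?_ hB0
            have h : ((((Finset.Icc 1 N).filter (fun k => Nat.dist j k ≤ M)).card : ℕ) : ℝ)
                ≤ ((2 * M + 1 : ℕ) : ℝ) := Nat.cast_le.mpr hcard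
            push_cast at h
            linarith
    have hfar : ∑ k ∈ (Finset.Icc 1 N).filter (fun k => ¬ Nat.dist j k ≤ M),
        |c (Nat.dist j k)| ≤ 2 * C * r ^ M / (1 - r) := by
      set far := (Finset.Icc 1 N).filter (fun k => ¬ Nat.dist j k ≤ M) with hfardef
      have step2 : ∑ k ∈ far, |c (Nat.dist j k)| ≤ ∑ k ∈ far, C * r ^ (Nat.dist j k) := by
        refine Finset.sum_le_sum fun k hk => ?_
        obtain ⟨_, hk2⟩ := Finset.mem_filter.mp hk
        exact hcdecay _ (by omega)
      refine step2.trans ?_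
      rw [← Finset.sum_filter_add_sum_filter_not far (fun k => k < j)]
      have hhalf : ∀ (s : Finset ℕ) (d : ℕ → ℕ), Set.InjOn d s →
          (∀ k ∈ s, d k ∈ Finset.Icc (M+1) N) →
          ∑ k ∈ s, C * r ^ (d k) ≤ C * r ^ M * (1 - r)⁻¹ := by
        intro s d hinj hmem
        have h1 : ∑ l ∈ s.image d, C * r ^ l = ∑ k ∈ s, C * r ^ (d k) :=
          Finset.sum_image (f := fun l => C * r ^ l) (fun a ha b hb hab => hinj ha hb hab)
        rw [← h1]
        refine le_trans ?_ hgeo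
        refine Finset.sum_le_sum_of_subset_of_nonneg ?_ (fun l _ _ => by positivity)
        intro l hl
        obtain ⟨k, hk, rfl⟩ := Finset.mem_image.mp hl
        exact hmem k hk
      have hlt : ∑ k ∈ far.filter (fun k => k < j), C * r ^ (Nat.dist j k)
          ≤ C * r ^ M * (1 - r)⁻¹ := by
        have heq : ∑ k ∈ far.filter (fun k => k < j), C * r ^ (Nat.dist j k)
            = ∑ k ∈ far.filter (fun k => k < j), C * r ^ (j - k) := by
          refine Finset.sum_congr rfl fun k hk => ?_
          obtain ⟨_, hk2⟩ := Finset.mem_filter.mp hk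
          rw [Nat.dist_comm, Nat.dist_eq_sub_of_le hk2.le]
        rw [heq]
        refine hhalf _ (fun k => j - k) ?_ ?_
        · intro a ha b hb hab
          simp only [Finset.coe_filter, Set.mem_setOf_eq, hfardef, Finset.mem_filter,
            Finset.mem_Icc] at ha hb
          have hab' : j - a = j - b := hab
          omega
        · intro k hk
          obtain ⟨hk1, hk2⟩ := Finset.mem_filter.mp hk
          obtain ⟨hk3, hk4⟩ := Finset.mem_filter.mp hk1
          obtain ⟨hk5, hk6⟩ := Finset.mem_Icc.mp hk3
          have hd : Nat.dist j k = j - k := by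
            rw [Nat.dist_comm]; exact Nat.dist_eq_sub_of_le hk2.le
          rw [hd] at hk4
          simp only [Finset.mem_Icc]
          omega
      have hgt : ∑ k ∈ far.filter (fun k => ¬ k < j), C * r ^ (Nat.dist j k)
          ≤ C * r ^ M * (1 - r)⁻¹ := by
        have heq : ∑ k ∈ far.filter (fun k => ¬ k < j), C * r ^ (Nat.dist j k)
            = ∑ k ∈ far.filter (fun k => ¬ k < j), C * r ^ (k - j) := by
          refine Finset.sum_congr rfl fun k hk => ?_
          obtain ⟨_, hk2⟩ := Finset.mem_filter.mp hk
          rw [Nat.dist_eq_sub_of_le (by omega)]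
        rw [heq]
        refine hhalf _ (fun k => k - j) ?_ ?_
        · intro a ha b hb hab
          simp only [Finset.coe_filter, Set.mem_setOf_eq, hfardef, Finset.mem_filter,
            Finset.mem_Icc] at ha hb
          have hab' : a - j = b - j := hab
          omega
        · intro k hk
          obtain ⟨hk1, hk2⟩ := Finset.mem_filter.mp hk
          obtain ⟨hk3, hk4⟩ := Finset.mem_filter.mp hk1
          obtain ⟨hk5, hk6⟩ := Finset.mem_Icc.mp hk3
          have hd : Nat.dist j k = k - j := Nat.dist_eq_sub_of_le (by omega)
          rw [hd] at hk4
          simp only [Finset.mem_Icc]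
          omega
      calc ∑ k ∈ far.filter (fun k => k < j), C * r ^ (Nat.dist j k)
            + ∑ k ∈ far.filter (fun k => ¬ k < j), C * r ^ (Nat.dist j k)
          ≤ C * r ^ M * (1 - r)⁻¹ + C * r ^ M * (1 - r)⁻¹ := add_le_add hlt hgt
        _ = 2 * C * r ^ M / (1 - r) := by ring
    linarith
  -- put everything together
  have hS : ∑ j ∈ Finset.Icc 1 N, ∑ k ∈ Finset.Icc 1 N, c (Nat.dist j k)
      ≤ (N:ℝ) * ((2 * (M:ℝ) + 1) * B + 2 * C * r ^ M / (1 - r)) := by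
    calc ∑ j ∈ Finset.Icc 1 N, ∑ k ∈ Finset.Icc 1 N, c (Nat.dist j k)
        ≤ ∑ j ∈ Finset.Icc 1 N, ((2 * (M:ℝ) + 1) * B + 2 * C * r ^ M / (1 - r)) :=
          Finset.sum_le_sum inner_bound
      _ = ((Finset.Icc 1 N).card : ℝ) * ((2 * (M:ℝ) + 1) * B + 2 * C * r ^ M / (1 - r)) := by
          rw [Finset.sum_const, nsmul_eq_mul]
      _ = (N:ℝ) * ((2 * (M:ℝ) + 1) * B + 2 * C * r ^ M / (1 - r)) := by
          rw [Nat.card_Icc]; norm_num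
  rw [hInt2]
  calc ((N:ℝ)⁻¹) ^ 2 * ∑ j ∈ Finset.Icc 1 N, ∑ k ∈ Finset.Icc 1 N, c (Nat.dist j k)
      ≤ ((N:ℝ)⁻¹) ^ 2 * ((N:ℝ) * ((2 * (M:ℝ) + 1) * B + 2 * C * Real.exp (-η * M) / (1 - r))) := by
        refine mul_le_mul_of_nonneg_left ?_ (by positivity)
        rw [hrl M]; exact hS
    _ = ((2 * (M:ℝ) + 1) * B + 2 * C * Real.exp (-η * M) / (1 - r)) / N := by
        field_simp
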